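/- Fix q, ℓ ∈ ℕ* with m = 2^q and a BI-DMC W (Bob's channel) with P_0 = W(·|0) everywhere positive. For each i ∈ {1,…,q}, let (φ_i, ψ_i) be an encoder–decoder pair for the level-i equivalent channel W^i, with φ_i: messages 𝒲_i → {0,1}^ℓ and ψ_i: (𝒴^{2^i})^ℓ → 𝒲_i, such that: (a) the average probability of error of (φ_i,ψ_i) over the memoryless channel (W^i)^{⊗ℓ} under a uniform message is at most ε_i, and (b) each decoding region D_{w_i} = {ỹ : ψ_i(ỹ) = w_i} is invariant under every permutation in Π_i^ℓ, where Π_i is the set of permutations of {1,…,2^i} mapping {1,…,2^{i−1}} onto itself and Π_i^ℓ acts by applying a (possibly different) element of Π_i to each of the ℓ blocks. Consider the MLC-PPM scheme: independent uniform messages W_1,…,W_q are encoded to X_i = φ_i(W_i) ∈ {0,1}^ℓ, in each position j ∈ {1,…,ℓ} the bits X_{1:q,j} are mapped to the PPM symbol x̃(X_{1:q,j}) and sent through W^{⊗m}, and the receiver performs multistage decoding: for i = q down to 1, Ŵ_i = ψ_i applied to the received symbols restricted, in each position j, to the coordinates 𝒜^q(X̂_{i+1:q,j}) (in increasing order), where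 X̂_k = φ_k(Ŵ_k). Then the probability of error satisfies P((Ŵ_1,…,Ŵ_q) ≠ (W_1,…,W_q)) ≤ Σ_{i=1}^q ε_i. -/

import Mathlib

open Finset

def IsPMF {𝒵 : Type} [Fintype 𝒵] (P : 𝒵 → ℝ) : Prop :=
  (∀ z, 0 ≤ P z) ∧ ∑ z, P z = 1

/-- Least-significant-bit-first binary-to-decimal map. -/
def dIdx (q : ℕ) (x : Fin q → Bool) : ℕ :=
  ∑ j : Fin q, if x j then 2^(j:ℕ) else 0

lemma sum_two_pow (q : ℕ) : ∑ j ∈ Finset.range q, 2^j = 2^q - 1 := by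
  induction q with
  | zero => simp
  | succ q ih =>
    rw [Finset.sum_range_succ, ih, pow_succ]
    have : 0 < 2^q := pow_pos (by norm_num) q
    omega

lemma dIdx_lt (q : ℕ) (x : Fin q → Bool) : dIdx q x < 2^q := by
  have h1 : dIdx q x ≤ ∑ j : Fin q, 2^(j:ℕ) := by
    apply Finset.sum_le_sum
    intro j _
    split <;> simp
  have h2 : ∑ j : Fin q, 2^(j:ℕ) = 2^q - 1 := by
    rw [Fin.sum_univ_eq_sum_range (fun j => 2^j) q, sum_two_pow]
  have : 0 < 2^q := pow_pos (by norm_num) q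
  omega

/-- Position (0-indexed) of the `1` in the PPM symbol encoding `x`. -/
def ppmPos (q : ℕ) (x : Fin q → Bool) : Fin (2^q) := ⟨dIdx q x, dIdx_lt q x⟩

/-- PPM super channel of the binary-input channel `W`:
`W̃(yt|x) = P1(y_{d(x)}) ∏_{h ≠ d(x)} P0(y_h)`. -/
noncomputable def superCh {𝒴 : Type} [Fintype 𝒴] [DecidableEq 𝒴] (W : Bool → 𝒴 → ℝ)
    (q : ℕ) (x : Fin q → Bool) (yt : Fin (2^q) → 𝒴) : ℝ :=
  W true (yt (ppmPos q x)) * ∏ h ∈ univ.erase (ppmPos q x), W false (yt h)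

/-- Conditional output pmf of the PPM super channel given the inputs off `S`:
`P_{Ỹ|X_{S^c}}(yt|x_{S^c}) = 2^{−|S|} ∑_{x_S} W̃(yt|x)`. -/
noncomputable def condOut {𝒴 : Type} [Fintype 𝒴] [DecidableEq 𝒴] (W : Bool → 𝒴 → ℝ)
    (q : ℕ) (S : Finset (Fin q)) (x : Fin q → Bool) (yt : Fin (2^q) → 𝒴) : ℝ :=
  ((2:ℝ)^S.card)⁻¹ * ∑ xs : {i : Fin q // i ∈ S} → Bool,
    superCh W q (fun i => if h : i ∈ S then xs ⟨i, h⟩ else x i) yt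

/-- Information density expectation `∑_{x,yt} 2^{−q} W̃(yt|x) log( P(yt|x_{A^c}) / P(yt|x_{B^c}) )`
(natural logarithm); with `A = ∅` and `B = S` this is `I(X_S;Ỹ|X_{S^c})`. -/
noncomputable def infoDen {𝒴 : Type} [Fintype 𝒴] [DecidableEq 𝒴] (W : Bool → 𝒴 → ℝ)
    (q : ℕ) (A B : Finset (Fin q)) : ℝ :=
  ∑ x : Fin q → Bool, ∑ yt : Fin (2^q) → 𝒴,
    ((2:ℝ)^q)⁻¹ * superCh W q x yt * Real.log (condOut W q A x yt / condOut W q B x yt)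

/-- Same with logarithm base 2 (information measured in bits). -/
noncomputable def infoDen2 {𝒴 : Type} [Fintype 𝒴] [DecidableEq 𝒴] (W : Bool → 𝒴 → ℝ)
    (q : ℕ) (A B : Finset (Fin q)) : ℝ :=
  ∑ x : Fin q → Bool, ∑ yt : Fin (2^q) → 𝒴,
    ((2:ℝ)^q)⁻¹ * superCh W q x yt * Real.logb 2 (condOut W q A x yt / condOut W q B x yt)

/-- Indicator of a proposition. -/
noncomputable def ind (P : Prop) : ℝ := @ite ℝ P (Classical.propDecidable P) 1 0

lemma two_pow_pos' (q : ℕ) : 0 < 2^q := pow_pos (by norm_num) q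

/-- The level-`i` equivalent channel (for 0-indexed level `i₀`, take `i = i₀ + 1`):
`W^i(y|x) = 2^{−(i−1)} ∑_{j=2^{i−1}x}^{2^{i−1}(x+1)−1} P0^{⊗2^i}(y) P1(y_j)/P0(y_j)`. -/
noncomputable def equivCh {𝒴 : Type} [Fintype 𝒴] (P0 P1 : 𝒴 → ℝ) (i : ℕ)
    (y : Fin (2^i) → 𝒴) (x : Bool) : ℝ :=
  ((2:ℝ)^(i-1))⁻¹ * ∑ j : Fin (2^i),
    if 2^(i-1) * (cond x 1 0) ≤ (j:ℕ) ∧ (j:ℕ) < 2^(i-1) * (cond x 1 0 + 1)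
    then (∏ h, P0 (y h)) * (P1 (y j) / P0 (y j)) else 0


/-! Multistage decoding can only fail if, at the highest erroneous level `i`, the genie-aided
decoder (fed the true codewords of the higher levels) fails, so a union bound reduces the claim to
one level. For that level the genie-aided decoder reads, in every PPM frame, the window of `2^(i+1)`
coordinates compatible with the true higher bits. The coordinates outside the window are i.i.d.
`P₀` and integrate out, leaving a single pulse whose half of the window is bit `i` and whose offset
inside that half is given by the lower bits. Decoding regions invariant under half-preserving
permutations make the error probability independent of the lower bits, hence equal to its average
over them, which is the error probability of the level-`i` code over the equivalent channel `W^i`.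
-/

lemma ind_nonneg (P : Prop) : 0 ≤ ind P := by
  unfold ind; split <;> norm_num

lemma ind_le_ind {P Q : Prop} (h : P → Q) : ind P ≤ ind Q := by
  unfold ind; split_ifs <;> simp_all

lemma ind_exists_le_sum {ι : Type*} [Fintype ι] (P : ι → Prop) :
    ind (∃ i, P i) ≤ ∑ i, ind (P i) := by
  by_cases h : ∃ i, P i
  · obtain ⟨i, hi⟩ := h
    calc ind (∃ i, P i) = ind (P i) := by simp only [ind, if_pos hi, if_pos (⟨i, hi⟩ : ∃ i, P i)]
      _ ≤ ∑ i, ind (P i) := single_le_sum (fun j _ => ind_nonneg (P j)) (mem_univ i)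
  · simp only [ind, if_neg h]
    exact sum_nonneg fun i _ => ind_nonneg _

section BinaryIndex

variable {q : ℕ}

def highPart (i : ℕ) (x : Fin q → Bool) : ℕ :=
  ∑ t : Fin q, if i < (t:ℕ) then (if x t then 2^(t:ℕ) else 0) else 0

def lowPart (i : ℕ) (x : Fin q → Bool) : ℕ :=
  ∑ t : Fin q, if (t:ℕ) < i then (if x t then 2^(t:ℕ) else 0) else 0

lemma lowPart_lt (i : ℕ) (x : Fin q → Bool) : lowPart i x < 2^i := by
  have h : lowPart i x
      = ∑ t ∈ (univ.filter fun t : Fin q => (t:ℕ) < i ∧ x t).map Fin.valEmbedding, 2^t := by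
    rw [sum_map, sum_filter]
    exact sum_congr rfl fun t _ => by by_cases h : (t:ℕ) < i <;> simp [h]
  rw [h]
  exact Nat.geomSum_lt le_rfl fun k hk => by
    obtain ⟨t, ht, rfl⟩ := mem_map.1 hk
    exact (mem_filter.1 ht).2.1

lemma dIdx_eq_highPart_add (i : Fin q) (x : Fin q → Bool) :
    dIdx q x = highPart i x + (2^(i:ℕ) * cond (x i) 1 0 + lowPart i x) := by
  have hsplit : ∀ t : Fin q, (if x t then 2^(t:ℕ) else 0)
      = (if (i:ℕ) < t then (if x t then 2^(t:ℕ) else 0) else 0)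
        + ((if t = i then 2^(t:ℕ) * cond (x t) 1 0 else 0)
        + (if (t:ℕ) < i then (if x t then 2^(t:ℕ) else 0) else 0)) := by
    intro t
    rcases lt_trichotomy (t:ℕ) i with h | h | h
    · simp [h, Fin.ne_of_lt h, h.not_gt]
    · obtain rfl := Fin.ext h
      cases x t <;> simp
    · simp [h, Fin.ne_of_gt h, h.not_gt]
  rw [dIdx, sum_congr rfl fun t _ => hsplit t, sum_add_distrib, sum_add_distrib, sum_ite_eq']
  simp [highPart, lowPart]

lemma two_pow_succ_dvd_highPart (i : ℕ) (x : Fin q → Bool) : 2^(i+1) ∣ highPart i x :=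
  dvd_sum fun t _ => by
    split_ifs with h
    · exact pow_dvd_pow 2 h
    all_goals exact dvd_zero _

lemma highPart_add_lt (i : Fin q) (x : Fin q → Bool) {r : ℕ} (hr : r < 2^((i:ℕ)+1)) :
    highPart i x + r < 2^q := by
  have hlt : highPart i x < 2^q := by
    have := dIdx_lt q x
    rw [dIdx_eq_highPart_add i x] at this
    omega
  obtain ⟨a, ha⟩ := two_pow_succ_dvd_highPart (i:ℕ) x
  obtain ⟨b, hb⟩ := pow_dvd_pow 2 (show (i:ℕ) + 1 ≤ q from i.2)
  rw [ha, hb] at hlt ⊢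
  have hab : 2^((i:ℕ)+1) * (a + 1) ≤ 2^((i:ℕ)+1) * b :=
    Nat.mul_le_mul_left _ (Nat.lt_of_mul_lt_mul_left hlt)
  rw [mul_add_one] at hab
  omega

lemma highPart_congr {i : ℕ} {x x' : Fin q → Bool} (h : ∀ t : Fin q, i < (t:ℕ) → x t = x' t) :
    highPart i x = highPart i x' :=
  sum_congr rfl fun t _ => by split_ifs with ht <;> simp_all

/-- Enumerates in increasing order the PPM coordinates compatible with the bits of `x` above `i`,
i.e. the paper's `𝒜^q(x_{i+2:q})` (the paper indexes levels and coordinates from 1). -/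
def windowEmb (i : Fin q) (x : Fin q → Bool) (r : Fin (2^((i:ℕ)+1))) : Fin (2^q) :=
  ⟨highPart i x + r, highPart_add_lt i x r.2⟩

lemma windowEmb_injective (i : Fin q) (x : Fin q → Bool) : Function.Injective (windowEmb i x) :=
  fun r s h => Fin.ext (by simpa [windowEmb] using h)

def halfEmb (i : ℕ) (b : Bool) (c : Fin (2^i)) : Fin (2^(i+1)) :=
  ⟨2^i * cond b 1 0 + c, by cases b <;> simp [pow_succ] <;> omega⟩

lemma halfEmb_lt_iff (i : ℕ) (b : Bool) (c : Fin (2^i)) :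
    (halfEmb i b c : ℕ) < 2^i ↔ b = false := by
  cases b <;> simp [halfEmb]

lemma windowEmb_halfEmb_lowPart (i : Fin q) (x : Fin q → Bool) :
    windowEmb i x (halfEmb i (x i) ⟨lowPart i x, lowPart_lt i x⟩) = ppmPos q x :=
  Fin.ext (dIdx_eq_highPart_add i x).symm

end BinaryIndex

section Pulse

variable {𝒴 κ : Type*} [Fintype κ] [DecidableEq κ]

def pulseCh (W : Bool → 𝒴 → ℝ) (j : κ) (y : κ → 𝒴) : ℝ :=
  ∏ h, W (decide (h = j)) (y h)

lemma pulseCh_eq_mul_prod_erase (W : Bool → 𝒴 → ℝ) (j : κ) (y : κ → 𝒴) :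
    pulseCh W j y = W true (y j) * ∏ h ∈ univ.erase j, W false (y h) := by
  rw [pulseCh, ← mul_prod_erase univ _ (mem_univ j), decide_eq_true rfl]
  congr 1
  exact prod_congr rfl fun h hh => by rw [decide_eq_false (ne_of_mem_erase hh)]

lemma superCh_eq_pulseCh {𝒴 : Type} [Fintype 𝒴] [DecidableEq 𝒴] (W : Bool → 𝒴 → ℝ) (q : ℕ)
    (x : Fin q → Bool) (y : Fin (2^q) → 𝒴) : superCh W q x y = pulseCh W (ppmPos q x) y :=
  (pulseCh_eq_mul_prod_erase W _ y).symm

lemma pulseCh_nonneg {W : Bool → 𝒴 → ℝ} (hW : ∀ b z, 0 ≤ W b z) (j : κ) (y : κ → 𝒴) :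
    0 ≤ pulseCh W j y :=
  prod_nonneg fun _ _ => hW _ _

lemma pulseCh_comp_perm (W : Bool → 𝒴 → ℝ) (j : κ) (y : κ → 𝒴) (π : Equiv.Perm κ) :
    pulseCh W j (y ∘ π) = pulseCh W (π j) y := by
  rw [pulseCh, pulseCh, ← Equiv.prod_comp π (fun h => W (decide (h = π j)) (y h))]
  simp only [Function.comp_apply, EmbeddingLike.apply_eq_iff_eq]

lemma pulseCh_eq_prod_mul_div {W : Bool → 𝒴 → ℝ} (hpos : ∀ z, 0 < W false z) (j : κ)
    (y : κ → 𝒴) :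
    pulseCh W j y = (∏ h, W false (y h)) * (W true (y j) / W false (y j)) := by
  rw [pulseCh_eq_mul_prod_erase, ← mul_prod_erase univ (fun h => W false (y h)) (mem_univ j)]
  field_simp [(hpos (y j)).ne']

end Pulse

section Marginal

variable {α β 𝒴 : Type*} [Fintype α] [Fintype β] [DecidableEq β] [Fintype 𝒴]

lemma sum_prod_mul_comp_of_injective [DecidableEq α] {e : β → α} (he : Function.Injective e)
    (K : α → 𝒴 → ℝ) (hK : ∀ a, a ∉ Set.range e → ∑ z, K a z = 1) (G : (β → 𝒴) → ℝ) :
    ∑ y : α → 𝒴, (∏ a, K a (y a)) * G (y ∘ e) = ∑ u : β → 𝒴, (∏ b, K (e b) (u b)) * G u := by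
  classical
  let split := Equiv.piEquivPiSubtypeProd (· ∈ Set.range e) (fun _ => 𝒴)
  let onRange : (β → 𝒴) ≃ (Set.range e → 𝒴) :=
    (Equiv.ofInjective e he).arrowCongr (Equiv.refl 𝒴)
  have hcompl : ∑ v : {a // a ∉ Set.range e} → 𝒴, ∏ a : {a // a ∉ Set.range e}, K a (v a) = 1 := by
    rw [← Fintype.prod_sum]
    exact prod_eq_one fun a _ => hK a a.2
  rw [← split.symm.sum_comp, Fintype.sum_prod_type, ← onRange.sum_comp]
  refine sum_congr rfl fun u _ => ?_
  have hrestrict : ∀ v, split.symm (onRange u, v) ∘ e = u := fun v => funext fun b => by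
    simp [split, onRange, Equiv.piEquivPiSubtypeProd_symm_apply]
  have hprod : ∀ v, ∏ a, K a (split.symm (onRange u, v) a)
      = (∏ b, K (e b) (u b)) * ∏ a : {a // a ∉ Set.range e}, K a (v a) := fun v => by
    rw [← Fintype.prod_subtype_mul_prod_subtype (· ∈ Set.range e)]
    congr 1
    · convert (Fintype.prod_equiv (Equiv.ofInjective e he) (fun b => K (e b) (u b))
        (fun a => K a (split.symm (onRange u, v) a)) fun b => by
          simp [split, onRange, Equiv.piEquivPiSubtypeProd_symm_apply]).symm
    · refine prod_congr rfl fun a _ => ?_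
      simp [split, Equiv.piEquivPiSubtypeProd_symm_apply, a.2]
  simp only [hrestrict, hprod]
  rw [← sum_mul, ← mul_sum, hcompl, mul_one]

lemma sum_pi_prod_mul_comp_of_injective {ι : Type*} [Fintype ι] [DecidableEq ι] [DecidableEq α]
    {e : ι → β → α} (he : ∀ p, Function.Injective (e p)) (K : ι → α → 𝒴 → ℝ)
    (hK : ∀ p a, a ∉ Set.range (e p) → ∑ z, K p a z = 1) (G : (ι → β → 𝒴) → ℝ) :
    ∑ y : ι → α → 𝒴, (∏ p, ∏ a, K p a (y p a)) * G (fun p => y p ∘ e p)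
      = ∑ u : ι → β → 𝒴, (∏ p, ∏ b, K p (e p b) (u p b)) * G u := by
  have he' : Function.Injective fun pb : ι × β => (pb.1, e pb.1 pb.2) := by
    rintro ⟨p, b⟩ ⟨p', b'⟩ h
    simp only [Prod.mk.injEq] at h
    obtain ⟨rfl, h⟩ := h
    rw [he p h]
  have hK' : ∀ pa : ι × α, pa ∉ Set.range (fun pb : ι × β => (pb.1, e pb.1 pb.2)) →
      ∑ z, K pa.1 pa.2 z = 1 := by
    rintro ⟨p, a⟩ ha
    exact hK p a fun ⟨b, hb⟩ => ha ⟨(p, b), by simp [hb]⟩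
  have := sum_prod_mul_comp_of_injective he' (fun pa => K pa.1 pa.2) hK' (G ∘ Function.curry)
  rw [← (Equiv.curry ι α 𝒴).sum_comp, ← (Equiv.curry ι β 𝒴).sum_comp]
  simp only [Fintype.prod_prod_type] at this
  exact this

end Marginal

section Symmetrization

lemma swap_apply_mem_of_iff {κ : Type*} [DecidableEq κ] {S : κ → Prop} {a b r : κ}
    (hab : S a ↔ S b) (hr : S r) :
    S (Equiv.swap a b r) := by
  rw [Equiv.swap_apply_def]
  split_ifs with ha hb
  · exact hab.1 (ha ▸ hr)
  · exact hab.2 (hb ▸ hr)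
  · exact hr

variable {ι κ 𝒴 : Type*} [Fintype ι] [DecidableEq ι] [Fintype κ] [Fintype 𝒴]

lemma sum_prod_pulseCh_mul_eq_of_invariant [DecidableEq κ] {M : Type*} (W : Bool → 𝒴 → ℝ)
    (S : κ → Prop) {ψ : (ι → κ → 𝒴) → M}
    (hψ : ∀ π : ι → Equiv.Perm κ, (∀ p r, S r → S (π p r)) →
      ∀ u, ψ (fun p r => u p (π p r)) = ψ u)
    (F : M → ℝ) {j j' : ι → κ} (hj : ∀ p, S (j p) ↔ S (j' p)) :
    ∑ u : ι → κ → 𝒴, (∏ p, pulseCh W (j p) (u p)) * F (ψ u)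
      = ∑ u : ι → κ → 𝒴, (∏ p, pulseCh W (j' p) (u p)) * F (ψ u) := by
  let π : ι → Equiv.Perm κ := fun p => Equiv.swap (j p) (j' p)
  have hπ : ∀ p r, S r → S (π p r) := fun p r => swap_apply_mem_of_iff (hj p)
  refine Fintype.sum_equiv (Equiv.piCongrRight fun p => (π p).symm.arrowCongr (Equiv.refl 𝒴))
    _ _ fun u => ?_
  change _ = (∏ p, pulseCh W (j' p) (u p ∘ π p)) * F (ψ fun p r => u p (π p r))
  have hperm : ∀ p, pulseCh W (j' p) (u p ∘ π p) = pulseCh W (j p) (u p) := fun p => by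
    rw [pulseCh_comp_perm, Equiv.swap_apply_right]
  rw [hψ π hπ u]
  simp only [hperm]

lemma sum_prod_avg_mul_eq {U : Type*} [Fintype U] [Nonempty κ] (T : ι → κ → U → ℝ)
    (G : (ι → U) → ℝ) (b₀ : ι → κ)
    (h : ∀ b : ι → κ, ∑ u : ι → U, (∏ p, T p (b p) (u p)) * G u
      = ∑ u : ι → U, (∏ p, T p (b₀ p) (u p)) * G u) :
    ∑ u : ι → U, (∏ p, (Fintype.card κ : ℝ)⁻¹ * ∑ c, T p c (u p)) * G u
      = ∑ u : ι → U, (∏ p, T p (b₀ p) (u p)) * G u := by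
  calc ∑ u : ι → U, (∏ p, (Fintype.card κ : ℝ)⁻¹ * ∑ c, T p c (u p)) * G u
      = ∑ b : ι → κ, ((Fintype.card κ : ℝ)⁻¹) ^ Fintype.card ι *
          ∑ u : ι → U, (∏ p, T p (b p) (u p)) * G u := by
        simp only [prod_mul_distrib, prod_const, Fintype.prod_sum, mul_sum, sum_mul, card_univ]
        rw [sum_comm]
        exact sum_congr rfl fun b _ => sum_congr rfl fun u _ => by ring
    _ = ∑ u : ι → U, (∏ p, T p (b₀ p) (u p)) * G u := by
        simp only [h, sum_const, card_univ, Fintype.card_fun, nsmul_eq_mul, Nat.cast_pow]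
        rw [← mul_assoc, ← mul_pow, mul_inv_cancel₀ (by positivity), one_pow, one_mul]

end Symmetrization

section EquivalentChannel

variable {𝒴 : Type} [Fintype 𝒴]

lemma equivCh_eq_avg_pulseCh {W : Bool → 𝒴 → ℝ} (hpos : ∀ z, 0 < W false z) (i : ℕ) (b : Bool)
    (y : Fin (2^(i+1)) → 𝒴) :
    equivCh (W false) (W true) (i+1) y b
      = ((2:ℝ)^i)⁻¹ * ∑ c : Fin (2^i), pulseCh W (halfEmb i b c) y := by
  have hhalf : ({j | 2^i * cond b 1 0 ≤ (j:ℕ) ∧ (j:ℕ) < 2^i * (cond b 1 0 + 1)} :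
      Finset (Fin (2^(i+1)))) = univ.image (halfEmb i b) := by
    ext j
    simp only [mem_filter, mem_univ, true_and, mem_image, halfEmb, Fin.ext_iff]
    constructor
    · rintro ⟨h₁, h₂⟩
      rw [mul_add_one] at h₂
      exact ⟨⟨j - 2^i * cond b 1 0, by omega⟩, Nat.add_sub_cancel' h₁⟩
    · rintro ⟨c, hc⟩
      have := c.2
      rw [mul_add_one]
      omega
  have hinj : Function.Injective (halfEmb i b) := fun c c' h => by
    simpa [halfEmb, Fin.ext_iff] using h
  rw [equivCh, Nat.add_sub_cancel, ← sum_filter, hhalf, sum_image hinj.injOn]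
  simp only [pulseCh_eq_prod_mul_div hpos]

variable [DecidableEq 𝒴]

lemma sum_prod_superCh_mul_window {q ℓ : ℕ} {W : Bool → 𝒴 → ℝ} (hW : ∑ z, W false z = 1)
    (hpos : ∀ z, 0 < W false z) (i : Fin q) {M : Type*}
    {ψ : (Fin ℓ → Fin (2^((i:ℕ)+1)) → 𝒴) → M}
    (hψ : ∀ π : Fin ℓ → Equiv.Perm (Fin (2^((i:ℕ)+1))),
      (∀ p (r : Fin (2^((i:ℕ)+1))), (r:ℕ) < 2^(i:ℕ) → (π p r : ℕ) < 2^(i:ℕ)) →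
        ∀ u, ψ (fun p r => u p (π p r)) = ψ u)
    (x : Fin ℓ → Fin q → Bool) (F : M → ℝ) :
    ∑ y : Fin ℓ → Fin (2^q) → 𝒴,
        (∏ p, superCh W q (x p) (y p)) * F (ψ fun p => y p ∘ windowEmb i (x p))
      = ∑ u, (∏ p, equivCh (W false) (W true) ((i:ℕ)+1) (u p) (x p i)) * F (ψ u) := by
  let low : Fin ℓ → Fin (2^(i:ℕ)) := fun p => ⟨lowPart i (x p), lowPart_lt i (x p)⟩
  let pos : Fin ℓ → Fin (2^((i:ℕ)+1)) := fun p => halfEmb i (x p i) (low p)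
  calc ∑ y : Fin ℓ → Fin (2^q) → 𝒴,
        (∏ p, superCh W q (x p) (y p)) * F (ψ fun p => y p ∘ windowEmb i (x p))
      = ∑ y : Fin ℓ → Fin (2^q) → 𝒴, (∏ p, ∏ a, W (decide (a = windowEmb i (x p) (pos p))) (y p a))
          * F (ψ fun p => y p ∘ windowEmb i (x p)) := by
        simp only [superCh_eq_pulseCh, pulseCh, pos, low, windowEmb_halfEmb_lowPart]
    _ = ∑ u, (∏ p, pulseCh W (pos p) (u p)) * F (ψ u) := by
        refine (sum_pi_prod_mul_comp_of_injective (fun p => windowEmb_injective i (x p))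
          (fun p a => W (decide (a = windowEmb i (x p) (pos p)))) ?_ fun u => F (ψ u)).trans ?_
        · intro p a ha
          rw [decide_eq_false fun h => ha ⟨pos p, h.symm⟩]
          exact hW
        · simp only [pulseCh, (windowEmb_injective i _).eq_iff]
    _ = ∑ u, (∏ p, (Fintype.card (Fin (2^(i:ℕ))) : ℝ)⁻¹ *
          ∑ c, pulseCh W (halfEmb i (x p i) c) (u p)) * F (ψ u) :=
        (sum_prod_avg_mul_eq (fun p c => pulseCh W (halfEmb i (x p i) c)) (fun u => F (ψ u)) low
          fun b => sum_prod_pulseCh_mul_eq_of_invariant W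
            (fun r : Fin (2^((i:ℕ)+1)) => (r:ℕ) < 2^(i:ℕ)) hψ F
            fun p => by simp only [halfEmb_lt_iff]).symm
    _ = ∑ u, (∏ p, equivCh (W false) (W true) ((i:ℕ)+1) (u p) (x p i)) * F (ψ u) := by
        simp only [equivCh_eq_avg_pulseCh hpos, Fintype.card_fin, Nat.cast_pow, Nat.cast_ofNat]

end EquivalentChannel

lemma exists_genie_ne_of_exists_ne {𝒴 : Type} {q ℓ : ℕ} {𝒲 : Fin q → Type}
    (φ : ∀ i : Fin q, 𝒲 i → Fin ℓ → Bool)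
    (ψ : ∀ i : Fin q, (Fin ℓ → Fin (2^((i:ℕ)+1)) → 𝒴) → 𝒲 i)
    (West : ∀ i : Fin q, (Fin ℓ → Fin (2^q) → 𝒴) → 𝒲 i)
    (hWest : ∀ i y, West i y = ψ i (fun p r =>
      y p ⟨(highPart i (fun t => φ t (West t y) p) + r) % 2^q, Nat.mod_lt _ (two_pow_pos' q)⟩))
    (w : ∀ i, 𝒲 i) (y : Fin ℓ → Fin (2^q) → 𝒴) (h : ∃ i, West i y ≠ w i) :
    ∃ i, ψ i (fun p => y p ∘ windowEmb i (fun t => φ t (w t) p)) ≠ w i := by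
  classical
  obtain ⟨i, hi, hmax⟩ := exists_max_image (univ.filter fun i => West i y ≠ w i) id
    (by simpa [Finset.Nonempty] using h)
  have hhigher : ∀ t : Fin q, (i:ℕ) < t → West t y = w t := fun t ht => by
    by_contra hne
    exact (hmax t (by simpa using hne)).not_gt ht
  refine ⟨i, ?_⟩
  convert (mem_filter.1 hi).2 using 1
  rw [hWest i]
  congr 1
  funext p r
  refine congrArg (y p) (Fin.ext ?_)
  show highPart i _ + (r:ℕ) = (highPart i _ + r) % 2^q
  rw [highPart_congr fun t ht => congrArg (φ t · p) (hhigher t ht),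
    Nat.mod_eq_of_lt (highPart_add_lt i _ r.2)]

lemma sum_prod_inv_card_mul_apply {ι : Type*} [Fintype ι] [DecidableEq ι] {𝒲 : ι → Type*}
    [∀ i, Fintype (𝒲 i)] [∀ i, Nonempty (𝒲 i)] (i : ι) (g : 𝒲 i → ℝ) :
    ∑ w : ∀ t, 𝒲 t, (∏ t, (Fintype.card (𝒲 t) : ℝ)⁻¹) * g (w i)
      = (Fintype.card (𝒲 i) : ℝ)⁻¹ * ∑ a, g a := by
  classical
  have hfiber : ∑ w : ∀ t, 𝒲 t, g (w i)
      = (∏ t ∈ univ.erase i, (Fintype.card (𝒲 t) : ℝ)) * ∑ a, g a := by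
    rw [← sum_fiberwise univ (fun w : ∀ t, 𝒲 t => w i), mul_sum]
    refine sum_congr rfl fun a _ => ?_
    rw [sum_congr rfl fun w hw => by rw [(mem_filter.1 hw).2], sum_const, ← Fintype.piFinset_univ,
      Fintype.card_filter_piFinset_eq_of_mem (fun t => univ) i (mem_univ a), nsmul_eq_mul]
    simp only [card_univ, Nat.cast_prod]
  rw [← mul_sum, hfiber, ← mul_prod_erase univ _ (mem_univ i), mul_assoc,
    ← mul_assoc (∏ t ∈ univ.erase i, _), ← prod_mul_distrib,
    prod_eq_one fun t _ => inv_mul_cancel₀ (by simp), one_mul]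

theorem stmt16_general {𝒴 : Type} [Fintype 𝒴] [DecidableEq 𝒴]
    (q ℓ : ℕ)
    (W : Bool → 𝒴 → ℝ) (hW : ∀ x, IsPMF (W x)) (hpos : ∀ y, 0 < W false y)
    (𝒲 : Fin q → Type) [∀ i, Fintype (𝒲 i)]
    [∀ i, Nonempty (𝒲 i)]
    (φ : ∀ i : Fin q, 𝒲 i → Fin ℓ → Bool)
    (ψ : ∀ i : Fin q, (Fin ℓ → Fin (2^((i:ℕ)+1)) → 𝒴) → 𝒲 i)
    (ε : Fin q → ℝ)
    (herr : ∀ i : Fin q,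
      (Fintype.card (𝒲 i) : ℝ)⁻¹ *
        ∑ w : 𝒲 i, ∑ yv : Fin ℓ → Fin (2^((i:ℕ)+1)) → 𝒴,
          (∏ p, equivCh (W false) (W true) ((i:ℕ)+1) (yv p) (φ i w p)) *
          ind (ψ i yv ≠ w) ≤ ε i)
    (hinv : ∀ (i : Fin q) (π : Fin ℓ → Equiv.Perm (Fin (2^((i:ℕ)+1)))),
      (∀ p (r : Fin (2^((i:ℕ)+1))), (r : ℕ) < 2^(i:ℕ) → ((π p r : ℕ) < 2^(i:ℕ))) →
      ∀ yv, ψ i (fun p r => yv p (π p r)) = ψ i yv)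
    (West : ∀ i : Fin q, (Fin ℓ → Fin (2^q) → 𝒴) → 𝒲 i)
    (hWest : ∀ i ytv, West i ytv = ψ i (fun p r =>
      ytv p ⟨((∑ t : Fin q, if (i:ℕ) < (t:ℕ) then
                  (if φ t (West t ytv) p then 2^(t:ℕ) else 0) else 0) + (r:ℕ)) % 2^q,
              Nat.mod_lt _ (two_pow_pos' q)⟩)) :
    ∑ w : ∀ i : Fin q, 𝒲 i, (∏ i, (Fintype.card (𝒲 i) : ℝ)⁻¹) *
      ∑ ytv : Fin ℓ → Fin (2^q) → 𝒴,
        (∏ p, superCh W q (fun i => φ i (w i) p) (ytv p)) *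
        ind (∃ i, West i ytv ≠ w i)
      ≤ ∑ i, ε i := by
  classical
  let x : (∀ i, 𝒲 i) → Fin ℓ → Fin q → Bool := fun w p t => φ t (w t) p
  let genieErr : Fin q → (∀ i, 𝒲 i) → (Fin ℓ → Fin (2^q) → 𝒴) → Prop :=
    fun i w y => ψ i (fun p => y p ∘ windowEmb i (x w p)) ≠ w i
  have hunion : ∀ w y, ind (∃ i, West i y ≠ w i) ≤ ∑ i, ind (genieErr i w y) := fun w y =>
    (ind_le_ind (exists_genie_ne_of_exists_ne φ ψ West hWest w y)).trans (ind_exists_le_sum _)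
  have hlevel : ∀ i, ∑ w, (∏ t, (Fintype.card (𝒲 t) : ℝ)⁻¹) *
      ∑ y, (∏ p, superCh W q (x w p) (y p)) * ind (genieErr i w y) ≤ ε i := fun i => by
    refine le_of_eq_of_le (Eq.trans (sum_congr rfl fun w _ => ?_)
      (sum_prod_inv_card_mul_apply i fun a => ∑ u, (∏ p, equivCh (W false) (W true) ((i:ℕ)+1)
        (u p) (φ i a p)) * ind (ψ i u ≠ a))) (herr i)
    congr 1
    exact sum_prod_superCh_mul_window (hW false).2 hpos i (hinv i) (x w) fun a => ind (a ≠ w i)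
  calc _ ≤ ∑ w, (∏ t, (Fintype.card (𝒲 t) : ℝ)⁻¹) *
        ∑ y, (∏ p, superCh W q (x w p) (y p)) * ∑ i, ind (genieErr i w y) := by
        gcongr with w _ y _
        · exact prod_nonneg fun p _ => by
            rw [superCh_eq_pulseCh]; exact pulseCh_nonneg (fun b => (hW b).1) _ _
        · exact hunion w y
    _ = ∑ i, ∑ w, (∏ t, (Fintype.card (𝒲 t) : ℝ)⁻¹) *
        ∑ y, (∏ p, superCh W q (x w p) (y p)) * ind (genieErr i w y) := by
        simp only [mul_sum]
        exact (sum_congr rfl fun w _ => sum_comm).trans sum_comm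
    _ ≤ ∑ i, ε i := sum_le_sum fun i _ => hlevel i

/-- Lemma 5 (multistage decoding): if for each (0-indexed) level `i` the code
`(φ_i, ψ_i)` has average error probability at most `ε_i` on the memoryless extension
of its equivalent channel, and each decoder's decoding regions are invariant under
all per-position permutations preserving the lower half of the coordinates, then the
MLC-PPM scheme with multistage decoding (each level decoded from the received PPM
symbols restricted, in each position, to the coordinates compatible with the
already-decoded higher levels, in increasing order) has error probability at most
`∑_i ε_i`. -/
theorem stmt16 {𝒴 : Type} [Fintype 𝒴] [DecidableEq 𝒴]
    (q ℓ : ℕ) (hq : 1 ≤ q) (hℓ : 1 ≤ ℓ)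
    (W : Bool → 𝒴 → ℝ) (hW : ∀ x, IsPMF (W x)) (hpos : ∀ y, 0 < W false y)
    (𝒲 : Fin q → Type) [∀ i, Fintype (𝒲 i)] [∀ i, DecidableEq (𝒲 i)]
    [∀ i, Nonempty (𝒲 i)]
    (φ : ∀ i : Fin q, 𝒲 i → Fin ℓ → Bool)
    (ψ : ∀ i : Fin q, (Fin ℓ → Fin (2^((i:ℕ)+1)) → 𝒴) → 𝒲 i)
    (ε : Fin q → ℝ)
    (herr : ∀ i : Fin q,
      (Fintype.card (𝒲 i) : ℝ)⁻¹ *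
        ∑ w : 𝒲 i, ∑ yv : Fin ℓ → Fin (2^((i:ℕ)+1)) → 𝒴,
          (∏ p, equivCh (W false) (W true) ((i:ℕ)+1) (yv p) (φ i w p)) *
          ind (ψ i yv ≠ w) ≤ ε i)
    (hinv : ∀ (i : Fin q) (π : Fin ℓ → Equiv.Perm (Fin (2^((i:ℕ)+1)))),
      (∀ p (r : Fin (2^((i:ℕ)+1))), (r : ℕ) < 2^(i:ℕ) → ((π p r : ℕ) < 2^(i:ℕ))) →
      ∀ yv, ψ i (fun p r => yv p (π p r)) = ψ i yv)
    (West : ∀ i : Fin q, (Fin ℓ → Fin (2^q) → 𝒴) → 𝒲 i)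
    (hWest : ∀ i ytv, West i ytv = ψ i (fun p r =>
      ytv p ⟨((∑ t : Fin q, if (i:ℕ) < (t:ℕ) then
                  (if φ t (West t ytv) p then 2^(t:ℕ) else 0) else 0) + (r:ℕ)) % 2^q,
              Nat.mod_lt _ (two_pow_pos' q)⟩)) :
    ∑ w : ∀ i : Fin q, 𝒲 i, (∏ i, (Fintype.card (𝒲 i) : ℝ)⁻¹) *
      ∑ ytv : Fin ℓ → Fin (2^q) → 𝒴,
        (∏ p, superCh W q (fun i => φ i (w i) p) (ytv p)) *
        ind (∃ i, West i ytv ≠ w i)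
      ≤ ∑ i, ε i :=
  stmt16_general q ℓ W hW hpos 𝒲 φ ψ ε herr hinv West hWest
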